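/- arXiv:1711.03340 — 11 statements merged into one kernel-verified Lean document; each statement's English description precedes it below -/
import Mathlib

section
/- For all n ≥ 0, the generating polynomial of even-sum subsets satisfies e_{2n}(x) = ((1+x)^{2n} + (1-x^2)^n)/2 and e_{2n+1}(x) = ((1+x)^{2n+1} + (1-x)(1-x^2)^n)/2. -/
def evenCount (n k : ℕ) : ℕ :=
  ((Finset.Icc 1 n).powerset.filter (fun S => S.card = k ∧ Even (S.sum id))).card

def oddCount (n k : ℕ) : ℕ :=
  ((Finset.Icc 1 n).powerset.filter (fun S => S.card = k ∧ Odd (S.sum id))).card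

noncomputable def ePoly (n : ℕ) : Polynomial ℚ :=
  ∑ k ∈ Finset.range (n + 1), (evenCount n k : ℚ) • Polynomial.X ^ k

/-!
Weighting each subset `T ⊆ {1, …, n}` by `(1 + (-1) ^ (∑ T)) x ^ #T` counts even-sum subsets twice
and odd-sum subsets not at all, and the weighted sum factors as
`(1 + x) ^ n + ∏ i ∈ [1, n], (1 + (-1) ^ i x)`. Consecutive factors pair up to
`(1 - x) (1 + x) = 1 - x ^ 2`.
-/

open Finset Polynomial

theorem ePoly_eq_sum_powerset_filter_even (n : ℕ) :
    ePoly n = ∑ T ∈ (Icc 1 n).powerset with Even (T.sum id), (X : ℚ[X]) ^ #T := by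
  have hcard : ∀ T ∈ {T ∈ (Icc 1 n).powerset | Even (T.sum id)}, #T ∈ range (n + 1) := by
    intro T hT
    have := card_le_card (mem_powerset.mp (mem_filter.mp hT).1)
    rw [Nat.card_Icc] at this
    exact mem_range.mpr (by omega)
  rw [← sum_fiberwise_of_maps_to' hcard]
  refine sum_congr rfl fun k _ => ?_
  rw [sum_const, filter_filter, evenCount, nsmul_eq_mul, smul_eq_C_mul, ← C_eq_natCast]
  simp_rw [and_comm]

theorem two_mul_sum_powerset_filter_even {R : Type*} [CommRing R] (s : Finset ℕ) (x : R) :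
    2 * ∑ T ∈ s.powerset with Even (T.sum id), x ^ #T =
      (1 + x) ^ #s + ∏ i ∈ s, (1 + (-1) ^ i * x) := by
  have hsign : ∀ (m : ℕ) (y : R), (if Even m then 2 * y else 0) = y + (-1) ^ m * y := by
    intro m y
    rcases Nat.even_or_odd m with hm | hm
    · rw [hm.neg_one_pow, if_pos hm]; ring
    · rw [hm.neg_one_pow, if_neg (Nat.not_even_iff_odd.mpr hm)]; ring
  rw [← prod_const, prod_one_add, prod_one_add, ← sum_add_distrib, mul_sum, sum_filter]
  refine sum_congr rfl fun T _ => ?_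
  rw [prod_mul_distrib, prod_pow_eq_pow_sum, prod_const]
  exact hsign _ _

theorem prod_Icc_one_add_neg_one_pow_mul_even {R : Type*} [CommRing R] (x : R) (n : ℕ) :
    ∏ i ∈ Icc 1 (2 * n), (1 + (-1) ^ i * x) = (1 - x ^ 2) ^ n := by
  induction n with
  | zero => simp
  | succ n ih =>
    rw [mul_add_one, prod_Icc_succ_top (by omega), prod_Icc_succ_top (by omega), ih,
      (Odd.neg_one_pow ⟨n, rfl⟩ : (-1 : R) ^ (2 * n + 1) = -1),
      (Even.neg_one_pow ⟨n + 1, by ring⟩ : (-1 : R) ^ (2 * n + 1 + 1) = 1)]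
    ring

theorem prod_Icc_one_add_neg_one_pow_mul_odd {R : Type*} [CommRing R] (x : R) (n : ℕ) :
    ∏ i ∈ Icc 1 (2 * n + 1), (1 + (-1) ^ i * x) = (1 - x) * (1 - x ^ 2) ^ n := by
  rw [prod_Icc_succ_top (by omega), prod_Icc_one_add_neg_one_pow_mul_even,
    (Odd.neg_one_pow ⟨n, rfl⟩ : (-1 : R) ^ (2 * n + 1) = -1)]
  ring

theorem ePoly_eq_half_mul (n : ℕ) :
    ePoly n = C (1 / 2 : ℚ) * ((1 + X) ^ n + ∏ i ∈ Icc 1 n, (1 + (-1) ^ i * X)) := by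
  have h := two_mul_sum_powerset_filter_even (Icc 1 n) (X : ℚ[X])
  rw [Nat.card_Icc, Nat.add_sub_cancel] at h
  rw [ePoly_eq_sum_powerset_filter_even, ← h, ← mul_assoc, ← C_ofNat, ← C_mul]
  norm_num

open Polynomial in
theorem stmt_2 (n : ℕ) :
    ePoly (2 * n) = C (1 / 2 : ℚ) * ((1 + X) ^ (2 * n) + (1 - X ^ 2) ^ n) ∧
    ePoly (2 * n + 1) =
      C (1 / 2 : ℚ) * ((1 + X) ^ (2 * n + 1) + (1 - X) * (1 - X ^ 2) ^ n) := by
  rw [ePoly_eq_half_mul, ePoly_eq_half_mul, prod_Icc_one_add_neg_one_pow_mul_even,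
    prod_Icc_one_add_neg_one_pow_mul_odd]
  exact ⟨rfl, rfl⟩
end

section
/- For all n ≥ 0, the generating polynomial of odd-sum subsets satisfies o_{2n}(x) = ((1+x)^{2n} - (1-x^2)^n)/2 and o_{2n+1}(x) = ((1+x)^{2n+1} - (1-x)(1-x^2)^n)/2. -/
noncomputable def oPoly (n : ℕ) : Polynomial ℚ :=
  ∑ k ∈ Finset.range (n + 1), (oddCount n k : ℚ) • Polynomial.X ^ k

open Polynomial Finset

theorem sum_powerset_pow_card {ι R : Type*} [CommSemiring R] (s : Finset ι) (x : R) :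
    ∑ t ∈ s.powerset, x ^ #t = (1 + x) ^ #s := by
  simpa [add_comm] using sum_pow_mul_eq_add_pow x 1 s

theorem sum_powerset_neg_one_pow_sum_mul_pow_card {R : Type*} [CommRing R] (s : Finset ℕ) (x : R) :
    ∑ t ∈ s.powerset, (-1) ^ t.sum id * x ^ #t = ∏ i ∈ s, (1 + (-1) ^ i * x) := by
  rw [prod_one_add]
  refine sum_congr rfl fun t _ => ?_
  rw [prod_mul_distrib, prod_pow_eq_pow_sum, prod_const]
  rfl

theorem prod_Icc_one_add_neg_one_pow_mul {R : Type*} [CommRing R] (n : ℕ) (x : R) :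
    ∏ i ∈ Icc 1 (2 * n), (1 + (-1) ^ i * x) = (1 - x ^ 2) ^ n := by
  induction n with
  | zero => simp
  | succ n ih =>
    rw [show 2 * (n + 1) = 2 * n + 1 + 1 by ring, prod_Icc_succ_top (by omega),
      prod_Icc_succ_top (by omega), ih]
    simp only [pow_succ (-1 : R), pow_mul]
    ring

theorem oPoly_eq_sum_odd (n : ℕ) :
    oPoly n = ∑ S ∈ (Icc 1 n).powerset with Odd (S.sum id), X ^ #S := by
  have card_mem_range (S) (hS : S ∈ (Icc 1 n).powerset.filter fun S => Odd (S.sum id)) :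
      #S ∈ range (n + 1) := by
    have := card_le_card (mem_powerset.mp (mem_filter.mp hS).1)
    simp only [Nat.card_Icc, add_tsub_cancel_right] at this
    exact mem_range.mpr (Nat.lt_succ_of_le this)
  rw [oPoly, ← sum_fiberwise_of_maps_to card_mem_range]
  refine sum_congr rfl fun k _ => ?_
  rw [sum_congr rfl fun S hS => by rw [(mem_filter.mp hS).2], sum_const, filter_filter,
    oddCount, Nat.cast_smul_eq_nsmul]
  simp only [and_comm]

theorem two_mul_oPoly (n : ℕ) :
    2 * oPoly n = (1 + X) ^ n - ∏ i ∈ Icc 1 n, (1 + (-1) ^ i * X) := by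
  have indicator (S : Finset ℕ) :
      X ^ #S - (-1) ^ S.sum id * X ^ #S = if Odd (S.sum id) then 2 * X ^ #S else (0 : ℚ[X]) := by
    rcases Nat.even_or_odd (S.sum id) with h | h
    · rw [h.neg_one_pow, if_neg (Nat.not_odd_iff_even.mpr h)]
      ring
    · rw [h.neg_one_pow, if_pos h]
      ring
  rw [oPoly_eq_sum_odd, mul_sum, sum_filter, ← sum_congr rfl fun S _ => indicator S,
    sum_sub_distrib, sum_powerset_pow_card, sum_powerset_neg_one_pow_sum_mul_pow_card,
    Nat.card_Icc, add_tsub_cancel_right]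

theorem oPoly_eq (n : ℕ) :
    oPoly n = C (1 / 2 : ℚ) * ((1 + X) ^ n - ∏ i ∈ Icc 1 n, (1 + (-1) ^ i * X)) := by
  rw [← two_mul_oPoly, ← mul_assoc, ← C_ofNat, ← C_mul]
  norm_num

open Polynomial in
theorem stmt_3 (n : ℕ) :
    oPoly (2 * n) = C (1 / 2 : ℚ) * ((1 + X) ^ (2 * n) - (1 - X ^ 2) ^ n) ∧
    oPoly (2 * n + 1) =
      C (1 / 2 : ℚ) * ((1 + X) ^ (2 * n + 1) - (1 - X) * (1 - X ^ 2) ^ n) := by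
  refine ⟨?_, ?_⟩
  · rw [oPoly_eq, prod_Icc_one_add_neg_one_pow_mul]
  · rw [oPoly_eq, prod_Icc_succ_top (by omega), prod_Icc_one_add_neg_one_pow_mul]
    simp only [pow_succ (-1 : ℚ[X]), pow_mul]
    ring
end

section
/- For all n, k ≥ 0, e(n,k) = Σ_j C(⌈n/2⌉, 2j) · C(⌊n/2⌋, k−2j), where the sum ranges over all integers j with 0 ≤ 2j ≤ k. -/
/-!
The parity of `∑ x ∈ S, x` is the parity of the number of odd elements of `S`. A `k`-subset of
`{1, …, n}` is the disjoint union of its odd part, a subset of the `⌈n/2⌉` odd numbers, and its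
even part, a subset of the `⌊n/2⌋` even numbers; counting by the size `2j` of the odd part gives
the sum.
-/

open Finset

section Split

variable {α : Type*} [DecidableEq α] (p : α → Prop) [DecidablePred p] (U : Finset α)

theorem filter_union_eq_left_of_forall {A B : Finset α} (hA : ∀ x ∈ A, p x)
    (hB : ∀ x ∈ B, ¬p x) : {x ∈ A ∪ B | p x} = A := by
  rw [filter_union, filter_true_of_mem hA, filter_false_of_mem hB, union_empty]

theorem card_powersetCard_filter_card_filter_eq {i k : ℕ} (hik : i ≤ k) :
    #{S ∈ U.powersetCard k | #{x ∈ S | p x} = i} =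
      (#{x ∈ U | p x}).choose i * (#{x ∈ U | ¬p x}).choose (k - i) := by
  rw [← card_powersetCard, ← card_powersetCard, ← card_product]
  refine card_bij' (fun S _ => ({x ∈ S | p x}, {x ∈ S | ¬p x})) (fun AB _ => AB.1 ∪ AB.2)
    ?_ ?_ ?_ ?_
  · intro S hS
    simp only [mem_filter, mem_powersetCard, mem_product] at hS ⊢
    obtain ⟨⟨hSU, hSk⟩, hSi⟩ := hS
    have : #{x ∈ S | p x} + #{x ∈ S | ¬p x} = #S := card_filter_add_card_filter_not _
    exact ⟨⟨filter_subset_filter _ hSU, hSi⟩, filter_subset_filter _ hSU, by omega⟩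
  · rintro ⟨A, B⟩ hAB
    simp only [mem_filter, mem_powersetCard, mem_product, subset_iff] at hAB ⊢
    obtain ⟨⟨hA, hAi⟩, hB, hBk⟩ := hAB
    have hdisj : Disjoint A B := disjoint_left.2 fun x hxA hxB => (hB hxB).2 (hA hxA).2
    refine ⟨⟨fun x hx => ?_, ?_⟩, ?_⟩
    · rcases mem_union.1 hx with hx | hx
      exacts [(hA hx).1, (hB hx).1]
    · rw [card_union_of_disjoint hdisj]
      omega
    · rw [filter_union_eq_left_of_forall p (fun x hx => (hA hx).2) (fun x hx => (hB hx).2), hAi]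
  · intro S _
    exact filter_union_filter_not_eq p S
  · rintro ⟨A, B⟩ hAB
    simp only [mem_filter, mem_powersetCard, mem_product, subset_iff] at hAB
    obtain ⟨⟨hA, -⟩, hB, -⟩ := hAB
    rw [filter_union_eq_left_of_forall p (fun x hx => (hA hx).2) (fun x hx => (hB hx).2),
      union_comm, filter_union_eq_left_of_forall _ (fun x hx => (hB hx).2)
        (fun x hx => not_not_intro (hA hx).2)]

theorem card_powersetCard_filter_even_card_filter (k : ℕ) :
    #{S ∈ U.powersetCard k | Even #{x ∈ S | p x}} =
      ∑ j ∈ range (k / 2 + 1),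
        (#{x ∈ U | p x}).choose (2 * j) * (#{x ∈ U | ¬p x}).choose (k - 2 * j) := by
  rw [card_eq_sum_card_fiberwise (f := fun S => #{x ∈ S | p x} / 2) (t := range (k / 2 + 1))]
  · refine sum_congr rfl fun j hj => ?_
    rw [← card_powersetCard_filter_card_filter_eq p U (by grind), filter_filter]
    congr 1
    -- an even number is determined by its half
    refine filter_congr fun S _ => ?_
    grind
  · intro S hS
    simp only [coe_filter, mem_powersetCard, Set.mem_ofPred_eq] at hS
    have : #{x ∈ S | p x} ≤ #S := card_filter_le _ _
    simp only [coe_range, Set.mem_Iio]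
    omega

end Split

theorem Nat.card_filter_even_Icc_one (n : ℕ) : #{x ∈ Icc 1 n | Even x} = n / 2 := by
  simp only [even_iff_two_dvd]
  -- `Icc 1 n` and `Ioc 0 n` are definitionally equal on `ℕ`
  exact Nat.Ioc_filter_dvd_card_eq_div n 2

theorem Nat.card_filter_odd_Icc_one (n : ℕ) : #{x ∈ Icc 1 n | Odd x} = (n + 1) / 2 := by
  have := card_filter_add_card_filter_not (s := Icc 1 n) (fun x => Odd x)
  simp only [Nat.not_odd_iff_even, Nat.card_filter_even_Icc_one, Nat.card_Icc] at this
  omega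

theorem evenCount_eq_card_filter_even_card_odd (n k : ℕ) :
    evenCount n k = #{S ∈ (Icc 1 n).powersetCard k | Even #{x ∈ S | Odd x}} := by
  rw [evenCount, powersetCard_eq_filter, filter_filter]
  simp only [id, even_sum_iff_even_card_odd]

theorem stmt_4 (n k : ℕ) :
    evenCount n k =
      ∑ j ∈ Finset.range (k / 2 + 1),
        ((n + 1) / 2).choose (2 * j) * (n / 2).choose (k - 2 * j) := by
  rw [evenCount_eq_card_filter_even_card_odd, card_powersetCard_filter_even_card_filter,
    Nat.card_filter_odd_Icc_one]
  simp only [Nat.not_odd_iff_even, Nat.card_filter_even_Icc_one]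
end

section
/- For all n ≥ 0, the number of n-subsets of {1,...,2n} with even sum equals Σ_k C(n,2k)^2. -/
/-!
A set `S ⊆ {1, …, 2n}` has even sum iff it contains an even number `j` of odd elements.
Choosing such an `S` of size `n` amounts to choosing `j` of the `n` odd numbers and `n - j`
of the `n` even numbers, so the count is `∑_{j even} C(n, j) C(n, n - j) = ∑_k C(n, 2k)²`.
-/

open Finset

section DisjointUnion

variable {α : Type*} [DecidableEq α] {A B : Finset α}

lemma union_inter_left_of_disjoint {P Q : Finset α} (h : Disjoint A B) (hP : P ⊆ A) (hQ : Q ⊆ B) :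
    (P ∪ Q) ∩ A = P := by
  rw [union_inter_distrib_right, inter_eq_left.2 hP,
    disjoint_iff_inter_eq_empty.1 (h.symm.mono_left hQ), union_empty]

lemma union_inter_right_of_disjoint {P Q : Finset α} (h : Disjoint A B) (hP : P ⊆ A)
    (hQ : Q ⊆ B) : (P ∪ Q) ∩ B = Q := by
  rw [union_comm, union_inter_left_of_disjoint h.symm hQ hP]

lemma card_inter_add_card_inter {S : Finset α} (h : Disjoint A B) (hS : S ⊆ A ∪ B) :
    #(S ∩ A) + #(S ∩ B) = #S := by
  rw [← card_union_of_disjoint (h.mono inter_subset_right inter_subset_right),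
    ← inter_union_distrib_left, inter_eq_left.2 hS]

lemma card_filter_powerset_card_inter (h : Disjoint A B) (j m : ℕ) :
    #{S ∈ (A ∪ B).powerset | #(S ∩ A) = j ∧ #(S ∩ B) = m} = (#A).choose j * (#B).choose m := by
  rw [← card_powersetCard, ← card_powersetCard, ← card_product]
  refine card_nbij' (fun S => (S ∩ A, S ∩ B)) (fun P => P.1 ∪ P.2) ?_ ?_ ?_ ?_ <;>
    simp only [Set.MapsTo, Set.LeftInvOn, mem_coe, mem_filter, mem_powerset, mem_product,
      mem_powersetCard, Prod.forall, and_imp]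
  · intro S _ hj hm
    exact ⟨⟨inter_subset_right, hj⟩, inter_subset_right, hm⟩
  · rintro P Q hPA rfl hQB rfl
    rw [union_inter_left_of_disjoint h hPA hQB, union_inter_right_of_disjoint h hPA hQB]
    exact ⟨union_subset_union hPA hQB, rfl, rfl⟩
  · intro S hS _ _
    rw [← inter_union_distrib_left, inter_eq_left.2 hS]
  · intro P Q hPA _ hQB _
    rw [union_inter_left_of_disjoint h hPA hQB, union_inter_right_of_disjoint h hPA hQB]

lemma card_filter_powerset_union_eq_sum_choose (h : Disjoint A B) (k : ℕ) (p : ℕ → Prop)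
    [DecidablePred p] :
    #{S ∈ (A ∪ B).powerset | #S = k ∧ p #(S ∩ A)} =
      ∑ j ∈ range (k + 1) with p j, (#A).choose j * (#B).choose (k - j) := by
  rw [card_eq_sum_card_fiberwise (f := fun S => #(S ∩ A)) (t := {j ∈ range (k + 1) | p j})]
  · refine sum_congr rfl fun j hj => ?_
    rw [mem_filter, mem_range] at hj
    rw [← card_filter_powerset_card_inter h, filter_filter]
    refine congrArg card (filter_congr fun S hS => ?_)
    have := card_inter_add_card_inter h (mem_powerset.1 hS)
    constructor
    · rintro ⟨⟨rfl, -⟩, rfl⟩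
      exact ⟨rfl, by omega⟩
    · rintro ⟨rfl, hm⟩
      exact ⟨⟨by omega, hj.2⟩, rfl⟩
  · intro S hS
    simp only [coe_filter, mem_powerset, Set.mem_ofPred_eq, mem_range] at hS ⊢
    have := card_le_card (inter_subset_left (s₁ := S) (s₂ := A))
    exact ⟨by omega, hS.2.2⟩

end DisjointUnion

lemma card_filter_powerset_even_sum (s : Finset ℕ) (k : ℕ) :
    #{S ∈ s.powerset | #S = k ∧ Even (S.sum id)} =
      ∑ j ∈ range (k + 1) with Even j,
        (#{x ∈ s | Odd x}).choose j * (#{x ∈ s | Even x}).choose (k - j) := by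
  have hdisj : Disjoint {x ∈ s | Odd x} {x ∈ s | Even x} :=
    disjoint_filter.2 fun x _ hodd heven => Nat.not_even_iff_odd.2 hodd heven
  have hunion : {x ∈ s | Odd x} ∪ {x ∈ s | Even x} = s := by
    rw [union_comm]; simpa only [Nat.not_even_iff_odd] using filter_union_filter_not_eq Even s
  rw [← card_filter_powerset_union_eq_sum_choose hdisj, hunion]
  refine congrArg card (filter_congr fun S hS => ?_)
  rw [even_sum_iff_even_card_odd, inter_filter, inter_eq_left.2 (mem_powerset.1 hS)]
  rfl

lemma card_filter_odd_Icc_one_two_mul (n : ℕ) : #{x ∈ Icc 1 (2 * n) | Odd x} = n := by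
  have : {x ∈ Icc 1 (2 * n) | Odd x} = (range n).image (fun i => 2 * i + 1) := by
    ext x
    simp only [mem_filter, mem_Icc, mem_image, mem_range, Nat.odd_iff]
    constructor
    · rintro ⟨hx, hodd⟩
      exact ⟨x / 2, by omega, by omega⟩
    · rintro ⟨i, hi, rfl⟩
      omega
  rw [this, card_image_of_injective _ fun a b h => by omega, card_range]

lemma card_filter_even_Icc_one_two_mul (n : ℕ) : #{x ∈ Icc 1 (2 * n) | Even x} = n := by
  have := card_filter_add_card_filter_not (s := Icc 1 (2 * n)) (p := Odd)
  simp only [Nat.not_odd_iff_even, card_filter_odd_Icc_one_two_mul, Nat.card_Icc] at this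
  omega

lemma sum_filter_even_range {M : Type*} [AddCommMonoid M] (f : ℕ → M) (n : ℕ) :
    ∑ j ∈ range (n + 1) with Even j, f j = ∑ k ∈ range (n / 2 + 1), f (2 * k) := by
  have : {j ∈ range (n + 1) | Even j} = (range (n / 2 + 1)).image (2 * ·) := by
    ext j
    simp only [mem_filter, mem_range, mem_image, Nat.even_iff]
    constructor
    · rintro ⟨hj, hev⟩
      exact ⟨j / 2, by omega, by omega⟩
    · rintro ⟨k, hk, rfl⟩
      omega
  rw [this, sum_image fun a _ b _ h => by omega]

theorem stmt_5 (n : ℕ) :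
    evenCount (2 * n) n = ∑ k ∈ Finset.range (n / 2 + 1), (n.choose (2 * k)) ^ 2 := by
  rw [evenCount, card_filter_powerset_even_sum, card_filter_odd_Icc_one_two_mul,
    card_filter_even_Icc_one_two_mul, sum_filter_even_range]
  refine sum_congr rfl fun k hk => ?_
  rw [Nat.choose_symm (by simp only [mem_range] at hk; omega), sq]
end

section
/- If n ≡ 0 or 3 (mod 4), then e(n, n−k) = e(n,k) for all 0 ≤ k ≤ n; i.e., the polynomial e_n(x) is palindromic. -/
/-!
Complementation `S ↦ {1, …, n} \ S` exchanges `k`-subsets and `(n - k)`-subsets, and it preserves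
the parity of the element sum exactly when `1 + ⋯ + n = n (n + 1) / 2` is even, i.e. when
`n ≡ 0, 3 (mod 4)`.
-/

open Finset

theorem Finset.sum_Icc_one_id_mul_two (n : ℕ) : (∑ i ∈ Icc 1 n, i) * 2 = n * (n + 1) := by
  induction n with
  | zero => simp
  | succ n ih => rw [sum_Icc_succ_top (by omega), add_mul, ih]; ring

theorem even_sum_Icc_one_of_mod_four (n : ℕ) (hn : n % 4 = 0 ∨ n % 4 = 3) :
    Even (∑ i ∈ Icc 1 n, i) := by
  have h := sum_Icc_one_id_mul_two n
  obtain ⟨m, rfl | rfl⟩ : ∃ m, n = 4 * m ∨ n = 4 * m + 3 := ⟨n / 4, by omega⟩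
  · exact ⟨m * (4 * m + 1), by linarith⟩
  · exact ⟨(m + 1) * (4 * m + 3), by linarith⟩

section Complement

variable {α : Type*} [DecidableEq α] {U S : Finset α} {f : α → ℕ}

theorem even_sum_sdiff_iff (hU : Even (U.sum f)) (hS : S ⊆ U) :
    Even ((U \ S).sum f) ↔ Even (S.sum f) := by
  rw [← sum_sdiff hS, Nat.even_add] at hU
  exact hU

theorem sdiff_mem_filter_card_even_sum (hU : Even (U.sum f)) {a b : ℕ} (hab : a + b = U.card)
    (hS : S ∈ U.powerset.filter (fun T => T.card = a ∧ Even (T.sum f))) :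
    U \ S ∈ U.powerset.filter (fun T => T.card = b ∧ Even (T.sum f)) := by
  simp only [mem_filter, mem_powerset] at hS ⊢
  obtain ⟨hSU, hcard, heven⟩ := hS
  exact ⟨sdiff_subset, by rw [card_sdiff_of_subset hSU]; omega,
    (even_sum_sdiff_iff hU hSU).2 heven⟩

theorem card_filter_card_even_sum_eq_of_add_eq_card (hU : Even (U.sum f)) {a b : ℕ}
    (hab : a + b = U.card) :
    (U.powerset.filter (fun T => T.card = a ∧ Even (T.sum f))).card =
      (U.powerset.filter (fun T => T.card = b ∧ Even (T.sum f))).card :=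
  card_bij' (fun S _ => U \ S) (fun S _ => U \ S)
    (fun _ hS => sdiff_mem_filter_card_even_sum hU hab hS)
    (fun _ hS => sdiff_mem_filter_card_even_sum hU (by omega) hS)
    (fun _ hS => _root_.sdiff_sdiff_eq_self (mem_powerset.1 (mem_filter.1 hS).1))
    (fun _ hS => _root_.sdiff_sdiff_eq_self (mem_powerset.1 (mem_filter.1 hS).1))

end Complement

theorem stmt_6 (n : ℕ) (hn : n % 4 = 0 ∨ n % 4 = 3) (k : ℕ) (hk : k ≤ n) :
    evenCount n (n - k) = evenCount n k :=
  card_filter_card_even_sum_eq_of_add_eq_card (even_sum_Icc_one_of_mod_four n hn)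
    (by rw [Nat.card_Icc]; omega)
end

section
/- Define L(n,k) by the recursion L(n,k) = L(n−2,k) + C(n−2,k−1) + L(n−2,k−2) with L(0,k) = [k=0], L(1,k) = [0 ≤ k ≤ 1], and L(n,k) = 0 for k < 0. Then L(n,k) = e(n,k) when k ≡ 0 or 3 (mod 4), and L(n,k) = o(n,k) when k ≡ 1 or 2 (mod 4). -/
def losanitsch : ℕ → ℕ → ℕ
  | 0, k => if k = 0 then 1 else 0
  | 1, k => if k ≤ 1 then 1 else 0
  | n + 2, k =>
      losanitsch n k + (if k = 0 then 0 else n.choose (k - 1)) +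
        (if 2 ≤ k then losanitsch n (k - 2) else 0)

/-!
Split the `k`-subsets of `{1, …, n + 2}` according to which of `n + 1`, `n + 2` they contain.
Those containing neither are the `k`-subsets of `{1, …, n}`. For each `(k - 1)`-subset `T` of
`{1, …, n}`, exactly one of `T ∪ {n + 1}`, `T ∪ {n + 2}` has a prescribed sum parity, since
`n + 1` and `n + 2` have different parities: this gives `C(n, k - 1)`. Adding both elements adds
the odd number `2n + 3`, which flips the parity. Hence the number of `k`-subsets with sum
parity `⌈k/2⌉` satisfies the Losanitsch recursion, because `⌈(k + 2)/2⌉ = ⌈k/2⌉ + 1`, and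
`⌈k/2⌉` is even exactly when `k ≡ 0, 3 (mod 4)`.
-/

open Finset

section ParityCount

variable {α : Type*} (s : Finset α) (w : α → ZMod 2)

def parityCount (k : ℕ) (r : ZMod 2) : ℕ :=
  #{t ∈ s.powersetCard k | ∑ i ∈ t, w i = r}

theorem parityCount_zero (r : ZMod 2) : parityCount s w 0 r = if r = 0 then 1 else 0 := by
  by_cases hr : r = 0 <;> simp [parityCount, powersetCard_zero, filter_singleton, hr, eq_comm]

theorem parityCount_eq_zero_of_card_lt {k : ℕ} (hk : #s < k) (r : ZMod 2) :
    parityCount s w k r = 0 := by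
  simp [parityCount, powersetCard_eq_empty.2 hk]

theorem parityCount_add_parityCount_add_one (k : ℕ) (r : ZMod 2) :
    parityCount s w k r + parityCount s w k (r + 1) = (#s).choose k := by
  have hne : ∀ x : ZMod 2, x = r + 1 ↔ ¬x = r := by revert r; decide
  rw [← card_powersetCard, ← card_filter_add_card_filter_not (fun t => ∑ i ∈ t, w i = r)]
  simp only [parityCount, hne]

variable [DecidableEq α] {s}

theorem parityCount_insert_succ {a : α} (ha : a ∉ s) (k : ℕ) (r : ZMod 2) :
    parityCount (insert a s) w (k + 1) r =
      parityCount s w (k + 1) r + parityCount s w k (r - w a) := by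
  have hmem : ∀ t ∈ s.powersetCard k, a ∉ t := fun t ht hat => ha ((mem_powersetCard.1 ht).1 hat)
  rw [parityCount, powersetCard_succ_insert ha, filter_union, card_union_of_disjoint, filter_image,
    card_image_of_injOn]
  · congr 1
    refine congrArg card (filter_congr fun t ht => ?_)
    rw [sum_insert (hmem t ht), eq_sub_iff_add_eq, add_comm]
  · intro t ht u hu htu
    rw [← erase_insert (hmem t (mem_filter.1 ht).1), ← erase_insert (hmem u (mem_filter.1 hu).1),
      htu]
  · refine disjoint_filter_filter (disjoint_left.2 fun t ht ht' => ?_)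
    obtain ⟨u, -, rfl⟩ := mem_image.1 ht'
    exact ha ((mem_powersetCard.1 ht).1 (mem_insert_self a u))

theorem parityCount_insert_insert_one {a b : α} (ha : a ∉ s) (hb : b ∉ insert a s)
    (hab : w b = w a + 1) (r : ZMod 2) :
    parityCount (insert b (insert a s)) w 1 r = parityCount s w 1 r + 1 := by
  rw [parityCount_insert_succ w hb, parityCount_insert_succ w ha, add_assoc, hab,
    show r - (w a + 1) = r - w a + 1 by grind, parityCount_zero (insert a s), ← parityCount_zero s w,
    parityCount_add_parityCount_add_one, Nat.choose_zero_right]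

theorem parityCount_insert_insert_add_two {a b : α} (ha : a ∉ s) (hb : b ∉ insert a s)
    (hab : w b = w a + 1) (k : ℕ) (r : ZMod 2) :
    parityCount (insert b (insert a s)) w (k + 2) r =
      parityCount s w (k + 2) r + (#s).choose (k + 1) + parityCount s w k (r + 1) := by
  rw [parityCount_insert_succ w hb, parityCount_insert_succ w ha, parityCount_insert_succ w ha,
    hab, show r - (w a + 1) - w a = r + 1 by grind, show r - (w a + 1) = r - w a + 1 by grind,
    ← parityCount_add_parityCount_add_one s w (k + 1) (r - w a)]
  ring

end ParityCount

theorem Icc_one_add_two_eq_insert (n : ℕ) :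
    Icc 1 (n + 2) = insert (n + 2) (insert (n + 1) (Icc 1 n)) := by
  ext x; simp only [mem_Icc, mem_insert]; omega

section Losanitsch

variable (n : ℕ) (r : ZMod 2)

theorem parityCount_Icc_add_two_one :
    parityCount (Icc 1 (n + 2)) (↑) 1 r = parityCount (Icc 1 n) (↑) 1 r + 1 := by
  rw [Icc_one_add_two_eq_insert]
  exact parityCount_insert_insert_one _ (by simp) (by simp) (by push_cast; ring) r

theorem parityCount_Icc_add_two (k : ℕ) :
    parityCount (Icc 1 (n + 2)) (↑) (k + 2) r = parityCount (Icc 1 n) (↑) (k + 2) r +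
      n.choose (k + 1) + parityCount (Icc 1 n) (↑) k (r + 1) := by
  rw [Icc_one_add_two_eq_insert, parityCount_insert_insert_add_two _ (by simp) (by simp)
    (by push_cast; ring), Nat.card_Icc, Nat.add_sub_cancel]

theorem losanitsch_eq_parityCount :
    ∀ n k, losanitsch n k = parityCount (Icc 1 n) (↑) k ((k + 1) / 2 : ℕ)
  | 0, 0 | 1, 0 => by simp [losanitsch, parityCount_zero]
  | 0, k + 1 => by rw [parityCount_eq_zero_of_card_lt _ _ (by simp)]; rfl
  | 1, 1 => by simp [losanitsch, parityCount, powersetCard_one, filter_singleton]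
  | 1, k + 2 => by simp [losanitsch, parityCount_eq_zero_of_card_lt]
  | n + 2, 0 => by simp [losanitsch, losanitsch_eq_parityCount n 0, parityCount_zero]
  | n + 2, 1 => by
    simp [losanitsch, losanitsch_eq_parityCount n 1, parityCount_Icc_add_two_one]
  | n + 2, k + 2 => by
    rw [losanitsch, if_neg (by omega), if_pos (by omega), show k + 2 - 1 = k + 1 by omega,
      Nat.add_sub_cancel, losanitsch_eq_parityCount n (k + 2), losanitsch_eq_parityCount n k,
      parityCount_Icc_add_two, show (k + 2 + 1) / 2 = (k + 1) / 2 + 1 by omega, Nat.cast_succ,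
      add_assoc _ 1 1, CharTwo.add_self_eq_zero, add_zero]

end Losanitsch

theorem evenCount_eq_parityCount (n k : ℕ) : evenCount n k = parityCount (Icc 1 n) (↑) k 0 := by
  rw [evenCount, parityCount, powersetCard_eq_filter, filter_filter]
  refine congrArg card (filter_congr fun t _ => ?_)
  rw [← Nat.cast_sum, ZMod.natCast_eq_zero_iff_even]
  rfl

theorem oddCount_eq_parityCount (n k : ℕ) : oddCount n k = parityCount (Icc 1 n) (↑) k 1 := by
  rw [oddCount, parityCount, powersetCard_eq_filter, filter_filter]
  refine congrArg card (filter_congr fun t _ => ?_)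
  rw [← Nat.cast_sum, ZMod.natCast_eq_one_iff_odd]
  rfl

theorem stmt_7 (n k : ℕ) :
    losanitsch n k =
      if k % 4 = 0 ∨ k % 4 = 3 then evenCount n k else oddCount n k := by
  rw [losanitsch_eq_parityCount, evenCount_eq_parityCount, oddCount_eq_parityCount]
  split_ifs with hk
  · rw [ZMod.natCast_eq_zero_iff_even.2 (Nat.even_iff.2 (by omega))]
  · rw [ZMod.natCast_eq_one_iff_odd.2 (Nat.odd_iff.2 (by omega))]
end

section
/- The Losanitsch number L(n,k) equals the number of 0-1 words of length n with exactly k ones and an even number of inversions. -/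
def inversions {n : ℕ} (w : Fin n → Bool) : ℕ :=
  (Finset.univ.filter
    (fun p : Fin n × Fin n => p.1 < p.2 ∧ w p.1 = true ∧ w p.2 = false)).card

def words (n k : ℕ) : Finset (Fin n → Bool) :=
  Finset.univ.filter (fun w => (Finset.univ.filter (fun i => w i = true)).card = k)

open Finset

def ones {n : ℕ} (w : Fin n → Bool) : ℕ := #{i | w i = true}

lemma ones_snoc {n : ℕ} (u : Fin n → Bool) (b : Bool) :
    ones (Fin.snoc u b : Fin (n + 1) → Bool) = ones u + b.toNat := by
  unfold ones
  rw [card_filter, card_filter, Fin.sum_univ_castSucc]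
  cases b <;> simp

lemma inversions_snoc {n : ℕ} (u : Fin n → Bool) (b : Bool) :
    inversions (Fin.snoc u b : Fin (n + 1) → Bool) = inversions u + if b then 0 else ones u := by
  unfold inversions ones
  rw [card_filter, card_filter, card_filter, Fintype.sum_prod_type, Fintype.sum_prod_type]
  simp only [Fin.sum_univ_castSucc, Fin.snoc_castSucc, Fin.snoc_last, Fin.castSucc_lt_castSucc_iff,
    Fin.castSucc_lt_last, lt_irrefl, false_and, if_false, (Fin.castSucc_lt_last _).not_gt,
    sum_add_distrib]
  cases b <;> simp

lemma card_filter_fin_succ_bool {n : ℕ} (Q : (Fin (n + 1) → Bool) → Prop) [DecidablePred Q] :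
    #{w | Q w} =
      #{u : Fin n → Bool | Q (Fin.snoc u false)} + #{u : Fin n → Bool | Q (Fin.snoc u true)} := by
  rw [card_filter, card_filter, card_filter, ← (Fin.snocEquiv fun _ => Bool).sum_comp,
    Fintype.sum_prod_type, Fintype.univ_bool, sum_insert (by simp), sum_singleton, add_comm]
  rfl

lemma words_eq_filter_ones (n k : ℕ) :
    words n k = ({w | ones w = k} : Finset (Fin n → Bool)) := rfl

def invCount (n k : ℕ) (P : ℕ → Prop) [DecidablePred P] : ℕ :=
  #{w ∈ words n k | P (inversions w)}

lemma invCount_congr {n k : ℕ} {P Q : ℕ → Prop} [DecidablePred P] [DecidablePred Q]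
    (h : ∀ m, P m ↔ Q m) : invCount n k P = invCount n k Q :=
  congrArg card (filter_congr fun _ _ => h _)

lemma invCount_zero (k : ℕ) (P : ℕ → Prop) [DecidablePred P] :
    invCount 0 k P = if k = 0 ∧ P 0 then 1 else 0 := by
  have hones (w : Fin 0 → Bool) : ones w = 0 := by simp [ones]
  have hinv (w : Fin 0 → Bool) : inversions w = 0 := by simp [inversions]
  simp only [invCount, words_eq_filter_ones, filter_filter, hones, hinv]
  rcases k with _ | k <;> by_cases hP : P 0 <;> simp [hP]

lemma invCount_succ_zero (n : ℕ) (P : ℕ → Prop) [DecidablePred P] :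
    invCount (n + 1) 0 P = invCount n 0 P := by
  simp only [invCount, words_eq_filter_ones, filter_filter]
  rw [card_filter_fin_succ_bool]
  simp only [ones_snoc, inversions_snoc, Bool.toNat_false, Bool.toNat_true, add_zero,
    Nat.add_one_ne_zero, false_and, filter_false, card_empty, Bool.false_eq_true, if_false]
  exact congrArg card (filter_congr fun _ _ => and_congr_right fun h => by rw [h, add_zero])

lemma invCount_succ_succ (n k : ℕ) (P : ℕ → Prop) [DecidablePred P] :
    invCount (n + 1) (k + 1) P =
      invCount n k P + invCount n (k + 1) (fun m => P (m + (k + 1))) := by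
  simp only [invCount, words_eq_filter_ones, filter_filter]
  rw [card_filter_fin_succ_bool, add_comm]
  simp only [ones_snoc, inversions_snoc, Bool.toNat_false, Bool.toNat_true, add_zero,
    add_left_inj, Bool.false_eq_true, if_false, if_true]
  exact congrArg _ (congrArg card (filter_congr fun _ _ => and_congr_right fun h => by rw [h]))

lemma card_words (n k : ℕ) : #(words n k) = n.choose k := by
  have h (n k : ℕ) : #(words n k) = invCount n k (fun _ => True) := by simp [invCount]
  induction n generalizing k with
  | zero => cases k <;> simp [h, invCount_zero]
  | succ n ih =>
    cases k with
    | zero => rw [h, invCount_succ_zero, ← h, ih, Nat.choose_zero_right, Nat.choose_zero_right]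
    | succ k => rw [h, invCount_succ_succ, ← h, ← h, ih, ih, Nat.choose_succ_succ']

lemma invCount_add_invCount_not (n k : ℕ) (P : ℕ → Prop) [DecidablePred P] :
    invCount n k P + invCount n k (fun m => ¬P m) = n.choose k := by
  rw [invCount, invCount, card_filter_add_card_filter_not, card_words]

lemma invCount_even_add_add_self (n k j : ℕ) :
    invCount n k (fun m => Even (m + j + j)) = invCount n k Even :=
  invCount_congr fun m => by simp [add_assoc, Nat.even_add]

lemma invCount_even_add_add_invCount_even_add_succ (n k j : ℕ) :
    invCount n k (fun m => Even (m + j)) + invCount n k (fun m => Even (m + (j + 1))) =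
      n.choose k := by
  have hnot (m : ℕ) : Even (m + (j + 1)) ↔ ¬Even (m + j) := by
    rw [← add_assoc, Nat.even_add_one]
  rw [invCount_congr hnot, invCount_add_invCount_not]

lemma invCount_even_add_two (n k : ℕ) :
    invCount (n + 2) k Even = invCount n k Even + (if k = 0 then 0 else n.choose (k - 1)) +
      (if 2 ≤ k then invCount n (k - 2) Even else 0) := by
  rcases k with _ | _ | k
  · simp [invCount_succ_zero]
  · have h := invCount_even_add_add_invCount_even_add_succ n 0 0
    rw [invCount_succ_succ, invCount_succ_zero, invCount_succ_succ, ← add_assoc]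
    simp only [add_zero] at h
    rw [h, invCount_even_add_add_self]
    simp [add_comm]
  · have h := invCount_even_add_add_invCount_even_add_succ n (k + 1) (k + 1)
    rw [invCount_succ_succ, invCount_succ_succ, invCount_succ_succ, invCount_even_add_add_self]
    simp only [Nat.add_one_ne_zero, if_false, le_add_iff_nonneg_left, zero_le, if_true,
      Nat.add_sub_cancel, show k + 1 + 1 - 2 = k by omega]
    omega

theorem stmt_8 (n k : ℕ) :
    losanitsch n k = ((words n k).filter (fun w => Even (inversions w))).card := by
  show losanitsch n k = invCount n k Even
  induction n using Nat.twoStepInduction generalizing k with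
  | zero => simp [losanitsch, invCount_zero]
  | one =>
    rcases k with _ | _ | k <;>
      simp [losanitsch, invCount_succ_zero, invCount_succ_succ, invCount_zero]
  | more n ih _ =>
    rw [losanitsch, invCount_even_add_two, ih, ih]
end

section
/- For all n ≥ 0, the Losanitsch polynomials satisfy L_{2n}(x) = ((1+x)^{2n} + (1+x^2)^n)/2 and L_{2n+1}(x) = ((1+x)^{2n+1} + (1+x)(1+x^2)^n)/2. In particular L_{2n+1}(x) = (1+x)L_{2n}(x). -/
noncomputable def LPoly (n : ℕ) : Polynomial ℚ :=
  ∑ k ∈ Finset.range (n + 1), (losanitsch n k : ℚ) • Polynomial.X ^ k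

/-!
The defining recurrence of `L(n, k)` says exactly that
`L_{n+2} = (1 + X²) L_n + X (1 + X)^n`. From it, `L_{2n+1} = (1 + X) L_{2n}` follows by
induction, and the closed form of `L_{2n}` is checked by induction using
`(1 + X)² = (1 + X²) + 2X`.
-/

open Polynomial

theorem losanitsch_eq_zero_of_lt : ∀ {n k : ℕ}, n < k → losanitsch n k = 0
  | 0, _, h => by simp [losanitsch]; omega
  | 1, _, h => by simp [losanitsch]; omega
  | n + 2, k, h => by
    have hk : 2 ≤ k := by omega
    simp [losanitsch, hk, losanitsch_eq_zero_of_lt (by omega : n < k),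
      losanitsch_eq_zero_of_lt (by omega : n < k - 2),
      Nat.choose_eq_zero_of_lt (by omega : n < k - 1)]

theorem coeff_LPoly (n k : ℕ) : (LPoly n).coeff k = losanitsch n k := by
  simp only [LPoly, finsetSum_coeff, coeff_smul, coeff_X_pow, smul_eq_mul, mul_ite, mul_one,
    mul_zero, Finset.sum_ite_eq, Finset.mem_range]
  split_ifs with hk
  · rfl
  · rw [losanitsch_eq_zero_of_lt (by omega), Nat.cast_zero]

theorem LPoly_zero : LPoly 0 = 1 := by
  simp [LPoly, losanitsch]

theorem LPoly_one : LPoly 1 = 1 + X := by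
  simp [LPoly, Finset.sum_range_succ, losanitsch]

theorem LPoly_add_two (n : ℕ) : LPoly (n + 2) = (1 + X ^ 2) * LPoly n + X * (1 + X) ^ n := by
  ext k
  rcases k with _ | _ | k <;>
    simp [coeff_LPoly, losanitsch, add_mul, coeff_X_pow_mul', coeff_one_add_X_pow, add_right_comm]

theorem LPoly_two_mul_add_one (n : ℕ) : LPoly (2 * n + 1) = (1 + X) * LPoly (2 * n) := by
  induction n with
  | zero => simp [LPoly_zero, LPoly_one]
  | succ m ih =>
    rw [show 2 * (m + 1) + 1 = 2 * m + 1 + 2 by ring, show 2 * (m + 1) = 2 * m + 2 by ring,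
      LPoly_add_two, LPoly_add_two, ih, pow_succ]
    ring

theorem LPoly_two_mul (n : ℕ) :
    LPoly (2 * n) = C (1 / 2 : ℚ) * ((1 + X) ^ (2 * n) + (1 + X ^ 2) ^ n) := by
  have two_mul_half : (2 : ℚ[X]) * C (1 / 2) = 1 := by
    rw [← C_ofNat, ← C_mul]; norm_num
  induction n with
  | zero => rw [LPoly_zero]; linear_combination -two_mul_half
  | succ m ih =>
    rw [show 2 * (m + 1) = 2 * m + 2 by ring, LPoly_add_two, ih]
    linear_combination -(X * (1 + X) ^ (2 * m)) * two_mul_half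

open Polynomial in
theorem stmt_9 (n : ℕ) :
    LPoly (2 * n) = C (1 / 2 : ℚ) * ((1 + X) ^ (2 * n) + (1 + X ^ 2) ^ n) ∧
    LPoly (2 * n + 1) =
      C (1 / 2 : ℚ) * ((1 + X) ^ (2 * n + 1) + (1 + X) * (1 + X ^ 2) ^ n) ∧
    LPoly (2 * n + 1) = (1 + X) * LPoly (2 * n) := by
  refine ⟨LPoly_two_mul n, ?_, LPoly_two_mul_add_one n⟩
  rw [LPoly_two_mul_add_one, LPoly_two_mul]
  ring
end

section
/- L(2n, 2k+1) = C(2n, 2k+1)/2, and in all other cases (i.e., when n is odd or k is even) L(n,k) = (C(n,k) + C(⌊n/2⌋, ⌊k/2⌋))/2. -/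
lemma Nat.choose_add_two_add_two (n k : ℕ) :
    (n + 2).choose (k + 2) = n.choose (k + 2) + 2 * n.choose (k + 1) + n.choose k := by
  rw [Nat.choose_succ_succ (n + 1), Nat.choose_succ_succ n, Nat.choose_succ_succ n]
  ring

/-- `P(n, k)`: a palindrome of length `n` is determined by its first `⌊n/2⌋` letters (and its
middle letter if `n` is odd), and has an even number of ones if `n` is even. -/
def palindromeCount (n k : ℕ) : ℕ :=
  if Even n ∧ Odd k then 0 else (n / 2).choose (k / 2)

namespace palindromeCount

lemma eq_zero_of_even_of_odd {n k : ℕ} (hn : Even n) (hk : Odd k) : palindromeCount n k = 0 :=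
  if_pos ⟨hn, hk⟩

lemma eq_choose_of_odd_or_even {n k : ℕ} (h : Odd n ∨ Even k) :
    palindromeCount n k = (n / 2).choose (k / 2) := by
  refine if_neg ?_
  rintro ⟨hn, hk⟩
  rcases h with hn' | hk'
  · exact Nat.not_even_iff_odd.2 hn' hn
  · exact Nat.not_odd_iff_even.2 hk' hk

lemma zero_right (n : ℕ) : palindromeCount n 0 = 1 := by
  simp [palindromeCount]

lemma zero_left (k : ℕ) : palindromeCount 0 k = if k = 0 then 1 else 0 := by
  rcases Nat.even_or_odd k with ⟨j, rfl⟩ | hk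
  · rcases j with _ | j <;> simp [palindromeCount, ← two_mul, Nat.choose_eq_zero_of_lt]
  · simp [palindromeCount, hk, hk.pos.ne']

lemma one_left (k : ℕ) : palindromeCount 1 k = if k ≤ 1 then 1 else 0 := by
  rcases k with _ | _ | k <;> simp [palindromeCount, Nat.choose_eq_zero_of_lt]

lemma add_two_one (n : ℕ) : palindromeCount (n + 2) 1 = palindromeCount n 1 := by
  simp [palindromeCount, Nat.even_add]

lemma add_two_add_two (n k : ℕ) :
    palindromeCount (n + 2) (k + 2) = palindromeCount n (k + 2) + palindromeCount n k := by
  have hn : (n + 2) / 2 = n / 2 + 1 := by omega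
  have hk : (k + 2) / 2 = k / 2 + 1 := by omega
  have hn2 : Even (n + 2) ↔ Even n := by simp [Nat.even_add]
  have hk2 : Odd (k + 2) ↔ Odd k := by simp [Nat.odd_add]
  simp only [palindromeCount, hn2, hk2, hn, hk]
  split_ifs
  · rfl
  · rw [Nat.choose_succ_succ, add_comm]

end palindromeCount

namespace losanitsch

lemma add_two_zero (n : ℕ) : losanitsch (n + 2) 0 = losanitsch n 0 := by
  simp [losanitsch]

lemma add_two_one (n : ℕ) : losanitsch (n + 2) 1 = losanitsch n 1 + 1 := by
  simp [losanitsch]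

lemma add_two_add_two (n k : ℕ) :
    losanitsch (n + 2) (k + 2) = losanitsch n (k + 2) + n.choose (k + 1) + losanitsch n k := by
  simp [losanitsch]

end losanitsch

theorem two_mul_losanitsch (n k : ℕ) :
    2 * losanitsch n k = n.choose k + palindromeCount n k := by
  induction n using Nat.twoStepInduction generalizing k with
  | zero =>
    rw [palindromeCount.zero_left]
    rcases k with _ | k <;> simp [losanitsch]
  | one =>
    rw [palindromeCount.one_left]
    rcases k with _ | _ | k <;> simp [losanitsch, Nat.choose_eq_zero_of_lt]
  | more n ih _ =>
    rcases k with _ | _ | k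
    · simpa [losanitsch.add_two_zero, palindromeCount.zero_right] using ih 0
    · have ih1 := ih 1
      rw [Nat.choose_one_right] at ih1
      rw [losanitsch.add_two_one, palindromeCount.add_two_one, Nat.choose_one_right]
      omega
    · have ih0 := ih k
      have ih2 := ih (k + 2)
      rw [losanitsch.add_two_add_two, palindromeCount.add_two_add_two,
        Nat.choose_add_two_add_two]
      omega

theorem stmt_11 :
    (∀ n k : ℕ, 2 * losanitsch (2 * n) (2 * k + 1) = (2 * n).choose (2 * k + 1)) ∧
    (∀ n k : ℕ, Odd n ∨ Even k →
      2 * losanitsch n k = n.choose k + (n / 2).choose (k / 2)) := by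
  refine ⟨fun n k => ?_, fun n k h => ?_⟩
  · rw [two_mul_losanitsch, palindromeCount.eq_zero_of_even_of_odd (even_two_mul n)
      (odd_two_mul_add_one k), add_zero]
  · rw [two_mul_losanitsch, palindromeCount.eq_choose_of_odd_or_even h]
end

section
/- For all n and k, q^{C(k+1,2)} · [n choose k]_q ≡ e(n,k) + o(n,k)·q (mod q^2 − 1) in ℤ[q]. -/
noncomputable def gaussBinom (n k : ℕ) : Polynomial ℤ :=
  ∑ w ∈ words n k, Polynomial.X ^ inversions w

open Finset

theorem sq_sub_one_dvd_pow_sub_pow_mod_two {R : Type*} [CommRing R] (x : R) (m : ℕ) :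
    x ^ 2 - 1 ∣ x ^ m - x ^ (m % 2) := by
  have hx : x ^ m - x ^ (m % 2) = ((x ^ 2) ^ (m / 2) - 1 ^ (m / 2)) * x ^ (m % 2) := by
    rw [one_pow, sub_mul, one_mul, ← pow_mul, ← pow_add, Nat.div_add_mod]
  rw [hx]
  exact dvd_mul_of_dvd_left (sub_dvd_pow_sub_pow _ _ _) _

theorem sum_pow_mod_two {R : Type*} [CommRing R] {ι : Type*} (x : R) (s : Finset ι)
    (f : ι → ℕ) :
    ∑ i ∈ s, x ^ (f i % 2) = #{i ∈ s | Even (f i)} + #{i ∈ s | Odd (f i)} * x := by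
  have hpow : ∀ i, x ^ (f i % 2) = if Even (f i) then 1 else x := fun i => by
    rcases Nat.even_or_odd (f i) with h | h
    · simp [h, Nat.even_iff.1 h]
    · simp [Nat.not_even_iff_odd.2 h, Nat.odd_iff.1 h]
  simp only [hpow, sum_ite, sum_const, nsmul_eq_mul, mul_one, Nat.not_even_iff_odd]

theorem sq_sub_one_dvd_sum_pow_sub {R : Type*} [CommRing R] {ι : Type*} (x : R)
    (s : Finset ι) (f : ι → ℕ) :
    x ^ 2 - 1 ∣ ∑ i ∈ s, x ^ f i - (#{i ∈ s | Even (f i)} + #{i ∈ s | Odd (f i)} * x) := by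
  rw [← sum_pow_mod_two, ← sum_sub_distrib]
  exact dvd_sum fun i _ => sq_sub_one_dvd_pow_sub_pow_mod_two x (f i)

theorem inversions_add_choose_two {n : ℕ} (w : Fin n → Bool) :
    inversions w + (#{i | w i = true} + 1).choose 2 = ∑ i ∈ {i | w i = true}, (n - i) := by
  set T : Finset (Fin n) := {i | w i = true}
  -- the `true` at position `i` is the left end of the `n - 1 - i` pairs `(i, j)` with `i < j`
  have hsum : ∑ i ∈ T, (n - i) = #{p ∈ T ×ˢ univ | p.1 < p.2} + #T := by
    rw [card_filter, sum_product, card_eq_sum_ones, ← sum_add_distrib]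
    refine sum_congr rfl fun i _ => ?_
    rw [← card_filter, filter_lt_eq_Ioi, Fin.card_Ioi]
    omega
  have hsplit : #{p ∈ T ×ˢ univ | p.1 < p.2} = inversions w + #{p ∈ T ×ˢ T | p.1 < p.2} := by
    rw [← card_filter_add_card_filter_not (p := fun p : Fin n × Fin n => w p.2 = false),
      filter_filter, filter_filter, inversions]
    congr 2 <;> ext p <;>
      simp only [Bool.not_eq_false, mem_filter, mem_product, mem_univ, true_and, and_true, T] <;>
      tauto
  rw [hsum, hsplit, card_product_filter_lt, Nat.choose_succ_succ', Nat.choose_one_right]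
  ring

def truePositionsRev {n : ℕ} (w : Fin n → Bool) : Finset ℕ :=
  image (fun i : Fin n => n - i) {i | w i = true}

theorem sub_val_injective (n : ℕ) : Function.Injective (fun i : Fin n => n - i) :=
  fun i j h => Fin.ext (by have := i.isLt; have := j.isLt; simp only at h; omega)

theorem mem_truePositionsRev {n : ℕ} (w : Fin n → Bool) (i : Fin n) :
    n - i ∈ truePositionsRev w ↔ w i = true := by
  simp [truePositionsRev, (sub_val_injective n).eq_iff]

theorem truePositionsRev_subset {n : ℕ} (w : Fin n → Bool) :
    truePositionsRev w ⊆ Icc 1 n := by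
  simp only [truePositionsRev, image_subset_iff, mem_Icc]
  intro i _
  omega

theorem card_truePositionsRev {n : ℕ} (w : Fin n → Bool) :
    #(truePositionsRev w) = #{i | w i = true} :=
  card_image_of_injective _ (sub_val_injective n)

theorem sum_truePositionsRev {n : ℕ} (w : Fin n → Bool) :
    (truePositionsRev w).sum id = inversions w + (#{i | w i = true} + 1).choose 2 := by
  rw [inversions_add_choose_two, truePositionsRev, sum_image (sub_val_injective n).injOn]
  rfl

theorem truePositionsRev_decide_mem {n : ℕ} {S : Finset ℕ} (hS : S ⊆ Icc 1 n) :
    truePositionsRev (fun i : Fin n => decide (n - i ∈ S)) = S := by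
  ext s
  simp only [truePositionsRev, mem_image, mem_filter, mem_univ, true_and, decide_eq_true_eq]
  refine ⟨fun ⟨i, hi, hs⟩ => hs ▸ hi, fun hs => ?_⟩
  have := mem_Icc.1 (hS hs)
  exact ⟨⟨n - s, by omega⟩, by simpa [Nat.sub_sub_self this.2] using hs, by simp; omega⟩

theorem card_filter_subsets_eq_card_filter_words (n k : ℕ) (P : ℕ → Prop) [DecidablePred P] :
    #{S ∈ (Icc 1 n).powerset | #S = k ∧ P (S.sum id)} =
      #{w ∈ words n k | P (inversions w + (k + 1).choose 2)} := by
  refine card_bij' (fun S _ i => decide (n - i ∈ S)) (fun w _ => truePositionsRev w)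
    ?_ ?_ ?_ ?_
  · intro S hS
    simp only [mem_filter, mem_powerset] at hS
    obtain ⟨hsub, rfl, hP⟩ := hS
    have hcard : #{i : Fin n | decide (n - i ∈ S) = true} = #S := by
      rw [← card_truePositionsRev, truePositionsRev_decide_mem hsub]
    simp only [words, mem_filter, mem_univ, true_and, hcard]
    rwa [← hcard, ← sum_truePositionsRev, truePositionsRev_decide_mem hsub]
  · intro w hw
    simp only [words, mem_filter, mem_univ, true_and] at hw
    obtain ⟨rfl, hP⟩ := hw
    simp only [mem_filter, mem_powerset, truePositionsRev_subset, card_truePositionsRev,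
      sum_truePositionsRev, hP, and_self]
  · intro S hS
    exact truePositionsRev_decide_mem (mem_powerset.1 (mem_filter.1 hS).1)
  · intro w _
    funext i
    simp [mem_truePositionsRev]

open Polynomial in
theorem stmt_15 (n k : ℕ) :
    (X ^ 2 - 1 : Polynomial ℤ) ∣
      (X ^ ((k + 1).choose 2) * gaussBinom n k -
        (C (evenCount n k : ℤ) + C (oddCount n k : ℤ) * X)) := by
  have hsum : X ^ ((k + 1).choose 2) * gaussBinom n k =
      ∑ w ∈ words n k, (X : ℤ[X]) ^ (inversions w + (k + 1).choose 2) := by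
    simp only [gaussBinom, mul_sum, ← pow_add, add_comm]
  rw [hsum, map_natCast, map_natCast, evenCount, oddCount,
    card_filter_subsets_eq_card_filter_words, card_filter_subsets_eq_card_filter_words]
  exact sq_sub_one_dvd_sum_pow_sub X _ _
end

section
/- For a prime p, all residue classes are equidistributed among k-subsets of {1,...,p} for 1 ≤ k ≤ p−1: the number of k-subsets of {1,...,p} whose element sum is congruent to j modulo p equals C(p,k)/p, independently of j. -/
/-!
Translating a `k`-subset of `ZMod p` by `c` shifts its sum by `k • c`, and `k • ·` is a bijection
of `ZMod p` because `p` does not divide `k`; so every residue is the sum of equally many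
`k`-subsets. Reduction mod `p` identifies `{1, …, p}` with `ZMod p` and carries subsets,
their sizes and their sums along.
-/

open Finset

section SubsetSums

variable {G : Type*} [AddCommGroup G] [Fintype G] [DecidableEq G]

def subsetsWithSum (k : ℕ) (a : G) : Finset (Finset G) :=
  (univ.powersetCard k).filter (fun T => ∑ x ∈ T, x = a)

@[simp]
lemma mem_subsetsWithSum {k : ℕ} {a : G} {T : Finset G} :
    T ∈ subsetsWithSum k a ↔ #T = k ∧ ∑ x ∈ T, x = a := by
  rw [subsetsWithSum, mem_filter, mem_powersetCard_univ]

lemma card_subsetsWithSum_add_nsmul (k : ℕ) (a c : G) :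
    #(subsetsWithSum k (a + k • c)) = #(subsetsWithSum k a) := by
  refine (card_equiv (Equiv.addRight c).finsetCongr fun T => ?_).symm
  simp only [mem_subsetsWithSum, Equiv.finsetCongr_apply, card_map, sum_map, Equiv.coe_toEmbedding, Equiv.coe_addRight, sum_add_distrib, sum_const]
  constructor
  · rintro ⟨rfl, rfl⟩; exact ⟨rfl, rfl⟩
  · rintro ⟨rfl, h⟩; exact ⟨rfl, add_right_cancel h⟩

lemma card_subsetsWithSum_eq_of_coprime {k : ℕ} (hk : (Nat.card G).Coprime k) (a b : G) :
    #(subsetsWithSum k a) = #(subsetsWithSum k b) := by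
  obtain ⟨c, hc⟩ := hk.nsmul_right_bijective.2 (b - a)
  rw [← card_subsetsWithSum_add_nsmul k a c, show k • c = b - a from hc, add_sub_cancel]

lemma sum_card_subsetsWithSum (k : ℕ) :
    ∑ a : G, #(subsetsWithSum k a) = (Fintype.card G).choose k := by
  rw [← card_univ, ← card_powersetCard]
  exact (card_eq_sum_card_fiberwise fun T _ => mem_univ (∑ x ∈ T, x)).symm

theorem card_mul_card_subsetsWithSum {k : ℕ} (hk : (Nat.card G).Coprime k) (a : G) :
    Fintype.card G * #(subsetsWithSum k a) = (Fintype.card G).choose k := by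
  rw [← sum_card_subsetsWithSum, ← card_univ, ← smul_eq_mul, ← sum_const]
  exact sum_congr rfl fun b _ => card_subsetsWithSum_eq_of_coprime hk a b

end SubsetSums

lemma card_powerset_filter_image_eq {α β : Type*} [DecidableEq β] [Fintype β] {s : Finset α}
    {f : α → β} (hf : Set.BijOn f s Set.univ) (P : Finset β → Prop) [DecidablePred P] :
    #(s.powerset.filter (fun S => P (S.image f))) = #(univ.filter P) := by
  refine card_nbij (·.image f) (fun S hS => ?_) ?_ (fun T hT => ?_)
  · simpa using (mem_filter.1 hS).2
  · exact (image_injOn_powerset_of_injOn hf.injOn).mono fun S hS => (mem_filter.1 hS).1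
  · have himage : (s.filter (f · ∈ T)).image f = T := by
      ext y
      obtain ⟨x, hx, rfl⟩ := hf.surjOn (Set.mem_univ y)
      simp only [mem_image, mem_filter]
      exact ⟨fun ⟨_, ⟨_, hz⟩, hzx⟩ => hzx ▸ hz, fun hxT => ⟨x, ⟨hx, hxT⟩, rfl⟩⟩
    refine ⟨s.filter (f · ∈ T), ?_, himage⟩
    simpa [himage] using (mem_filter.1 hT).2

lemma ZMod.bijOn_natCast_Icc (n : ℕ) [NeZero n] :
    Set.BijOn (Nat.cast : ℕ → ZMod n) (Icc 1 n) Set.univ := by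
  rw [← coe_univ, ← image_eq_iff_bijOn_of_card (by simp)]
  refine eq_univ_of_forall fun t => mem_image.2 ⟨(t - 1).val + 1, ?_, by simp⟩
  have := (t - 1).val_lt
  simp only [mem_Icc]; omega

theorem stmt_18 (p k : ℕ) (hp : p.Prime) (hk1 : 1 ≤ k) (hk2 : k ≤ p - 1) (j : ℕ) :
    p * ((Finset.Icc 1 p).powerset.filter
          (fun S => S.card = k ∧ S.sum id % p = j % p)).card = p.choose k := by
  have : NeZero p := ⟨hp.ne_zero⟩
  have hcoprime : (Nat.card (ZMod p)).Coprime k := by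
    rw [Nat.card_zmod]
    exact hp.coprime_iff_not_dvd.2 (Nat.not_dvd_of_pos_of_lt (by omega) (by omega))
  have hcast := ZMod.bijOn_natCast_Icc p
  have hfilter : (Icc 1 p).powerset.filter (fun S => #S = k ∧ S.sum id % p = j % p) =
      (Icc 1 p).powerset.filter
        (fun S => S.image (Nat.cast : ℕ → ZMod p) ∈ subsetsWithSum k (j : ZMod p)) := by
    refine filter_congr fun S hS => ?_
    have hinj := hcast.injOn.mono (mem_powerset.1 hS)
    rw [mem_subsetsWithSum, card_image_of_injOn hinj, sum_image hinj, ← Nat.cast_sum,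
      ZMod.natCast_eq_natCast_iff']
    rfl
  rw [hfilter, card_powerset_filter_image_eq hcast (· ∈ subsetsWithSum k (j : ZMod p)),
    filter_univ_mem]
  simpa using card_mul_card_subsetsWithSum hcoprime (j : ZMod p)
end
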